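/- arXiv:1506.00160 — 7 statements merged into one kernel-verified Lean document; each statement's English description precedes it below -/
import Mathlib

section
/- Let d, h be positive integers and let F_1,…,F_h ∈ ℤ[x_1,…,x_d] be nonzero polynomials that are not relatively prime in ℚ[x_1,…,x_d], i.e., some prime element of ℚ[x_1,…,x_d] divides all of them. Then lim_{k→∞} (2k+1)^{−d} · #{x ∈ Box(k)^d : gcd(F_1(x), F_2(x), …, F_h(x)) = 1} = 0. -/
/-!
Clearing denominators in a common prime factor over `ℚ` gives a nonconstant `G ∈ ℤ[x]` and an
integer `N ≠ 0` with `G ∣ N F_j` for all `j`. At a point `x` where `gcd_j F_j(x) = 1` this forces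
`G(x) ∣ N`, so `x` lies on one of the finitely many hypersurfaces `G = t`, `|t| ≤ |N|`. By
Schwartz–Zippel each of them meets `Box(k)^d` in `O((2k+1)^(d-1))` points.
-/

open Filter MvPolynomial Finset

namespace MvPolynomial

variable {σ R : Type*} [CommRing R]

attribute [local instance] algebraMvPolynomial in
theorem exists_map_eq_C_mul {K : Type*} [CommRing K] [Algebra R K] (M : Submonoid R)
    [IsLocalization M K] (p : MvPolynomial σ K) :
    ∃ m ∈ M, ∃ G : MvPolynomial σ R, map (algebraMap R K) G = C (algebraMap R K m) * p := by
  obtain ⟨⟨_, m, hm, rfl⟩, G, hG⟩ :=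
    IsLocalization.exists_integer_multiple' (M.map (C (σ := σ))) p
  exact ⟨m, hm, G, by rw [← algebraMap_def, hG, algebraMap_def, map_C, mul_comm]⟩

theorem exists_nonconstant_dvd_C_mul [IsDomain R] {K ι : Type*} [Field K] [Algebra R K]
    [IsFractionRing R K] [Fintype ι] (F : ι → MvPolynomial σ R) {q : MvPolynomial σ K}
    (hq : Prime q) (hqF : ∀ j, q ∣ map (algebraMap R K) (F j)) :
    ∃ G : MvPolynomial σ R, ∃ N : R, N ≠ 0 ∧ (∀ t, G ≠ C t) ∧ ∀ j, G ∣ C N * F j := by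
  obtain ⟨m, hm, G, hG⟩ := exists_map_eq_C_mul (nonZeroDivisors R) q
  choose H hH using hqF
  choose M hM P hP using fun j => exists_map_eq_C_mul (nonZeroDivisors R) (H j)
  have hm0 : algebraMap R K m ≠ 0 := IsFractionRing.to_map_ne_zero_of_mem_nonZeroDivisors hm
  refine ⟨G, m * ∏ j, M j, nonZeroDivisors.ne_zero (mul_mem hm (prod_mem fun j _ => hM j)),
    ?_, fun j => ?_⟩
  · rintro t rfl
    rw [map_C] at hG
    have hq_dvd : q ∣ C (algebraMap R K t) := ⟨_, hG.trans (mul_comm _ _)⟩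
    by_cases ht : algebraMap R K t = 0
    · rw [ht, map_zero, eq_comm, mul_eq_zero, C_eq_zero] at hG
      exact hG.elim hm0 hq.ne_zero
    · exact hq.not_isUnit (isUnit_of_dvd_unit hq_dvd ((Ne.isUnit ht).map C))
  · have hrel : C (m * M j) * F j = G * P j :=
      map_injective (algebraMap R K) (IsFractionRing.injective R K) (by
        simp only [map_mul, map_C, hG, hP, hH]
        ring)
    calc G ∣ C (m * M j) * F j := ⟨P j, hrel⟩
      _ ∣ C (m * ∏ j, M j) * F j :=
        mul_dvd_mul_right (map_dvd C (mul_dvd_mul_left m (dvd_prod_of_mem _ (mem_univ j)))) _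

theorem eval_dvd_of_dvd_C_mul_of_gcd_eq_one [StrongNormalizedGCDMonoid R] {ι : Type*}
    (s : Finset ι) {F : ι → MvPolynomial σ R} {G : MvPolynomial σ R} {N : R}
    (hGF : ∀ j ∈ s, G ∣ C N * F j) {x : σ → R} (hx : s.gcd (fun j => eval x (F j)) = 1) :
    eval x G ∣ N := by
  have hdvd : eval x G ∣ s.gcd (fun j => N * eval x (F j)) :=
    dvd_gcd fun j hj => by simpa using map_dvd (eval x) (hGF j hj)
  rwa [Finset.gcd_mul_left, hx, mul_one, dvd_normalize_iff] at hdvd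


theorem card_filter_eval_eq_zero_mul_card_le [IsDomain R] [DecidableEq R] {n : ℕ}
    {p : MvPolynomial (Fin n) R} (hp : p ≠ 0) (S : Finset R) :
    #{x ∈ Fintype.piFinset fun _ => S | eval x p = 0} * #S ≤ p.totalDegree * #S ^ n := by
  rcases S.eq_empty_or_nonempty with rfl | hS
  · simp
  have hSZ := schwartz_zippel_totalDegree hp S
  rw [div_le_div_iff₀ (by positivity) (by positivity)] at hSZ
  exact_mod_cast hSZ

theorem card_filter_eval_mem_mul_card_le [IsDomain R] [DecidableEq R] {n : ℕ}
    {G : MvPolynomial (Fin n) R} (hG : ∀ t, G ≠ C t) (T S : Finset R) :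
    #{x ∈ Fintype.piFinset fun _ => S | eval x G ∈ T} * #S ≤
      (∑ t ∈ T, (G - C t).totalDegree) * #S ^ n := by
  have hsub : {x ∈ Fintype.piFinset fun _ : Fin n => S | eval x G ∈ T} ⊆
      T.biUnion fun t => {x ∈ Fintype.piFinset fun _ => S | eval x (G - C t) = 0} := by
    intro x hx
    simp only [mem_filter, mem_biUnion, eval_sub, eval_C, sub_eq_zero] at hx ⊢
    exact ⟨_, hx.2, hx.1, rfl⟩
  calc _ ≤ (∑ t ∈ T, #{x ∈ Fintype.piFinset fun _ => S | eval x (G - C t) = 0}) * #S :=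
        Nat.mul_le_mul_right _ ((card_le_card hsub).trans card_biUnion_le)
    _ ≤ _ := by
      rw [sum_mul, sum_mul]
      exact sum_le_sum fun t _ =>
        card_filter_eval_eq_zero_mul_card_le (sub_ne_zero.mpr (hG t)) S

end MvPolynomial

theorem tendsto_div_two_mul_add_one_pow_of_mul_le {a : ℕ → ℕ} {c d : ℕ}
    (h : ∀ k, a k * (2 * k + 1) ≤ c * (2 * k + 1) ^ d) :
    Tendsto (fun k : ℕ => (a k : ℝ) / (2 * (k : ℝ) + 1) ^ d) atTop (nhds 0) := by
  have hpos : ∀ k : ℕ, (0 : ℝ) < 2 * k + 1 := fun k => by positivity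
  refine squeeze_zero (fun k => by positivity) (g := fun k : ℕ => (c : ℝ) / (2 * k + 1))
    (fun k => ?_) ?_
  · rw [div_le_div_iff₀ (pow_pos (hpos k) d) (hpos k)]
    exact_mod_cast h k
  · refine tendsto_const_nhds.div_atTop (tendsto_atTop_add_const_right _ _ ?_)
    exact tendsto_natCast_atTop_atTop.const_mul_atTop two_pos

theorem stmt1_general (d h : ℕ)
    (F : Fin h → MvPolynomial (Fin d) ℤ)
    (hncop : ∃ q : MvPolynomial (Fin d) ℚ, Prime q ∧
      ∀ j, q ∣ MvPolynomial.map (Int.castRingHom ℚ) (F j)) :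
    Tendsto (fun k : ℕ =>
      (Nat.card {x : Fin d → ℤ //
          (∀ t, x t ∈ Set.Icc (-(k : ℤ)) (k : ℤ)) ∧
          Finset.gcd Finset.univ (fun j => eval x (F j)) = 1} : ℝ)
        / (2 * (k : ℝ) + 1) ^ d) atTop (nhds 0) := by
  obtain ⟨q, hq, hqF⟩ := hncop
  rw [← algebraMap_int_eq] at hqF
  obtain ⟨G, N, hN, hG, hGF⟩ := exists_nonconstant_dvd_C_mul F hq hqF
  refine tendsto_div_two_mul_add_one_pow_of_mul_le
    (c := ∑ t ∈ Icc (-|N|) |N|, (G - C t).totalDegree) fun k => ?_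
  have hbox : #(Icc (-(k : ℤ)) k) = 2 * k + 1 := by simp; omega
  have hsub : {x : Fin d → ℤ | (∀ t, x t ∈ Set.Icc (-(k : ℤ)) k) ∧
        Finset.gcd Finset.univ (fun j => eval x (F j)) = 1} ⊆
      ↑{x ∈ Fintype.piFinset fun _ : Fin d => Icc (-(k : ℤ)) k | eval x G ∈ Icc (-|N|) |N|} := by
    rintro x ⟨hx, hgcd⟩
    have hGN := eval_dvd_of_dvd_C_mul_of_gcd_eq_one univ (fun j _ => hGF j) hgcd
    simp only [coe_filter, Fintype.mem_piFinset, mem_Icc, Set.mem_ofPred_eq]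
    exact ⟨hx, abs_le.mp <| Int.le_of_dvd (abs_pos.mpr hN) ((abs_dvd_abs _ _).mpr hGN)⟩
  calc _ ≤ #{x ∈ Fintype.piFinset fun _ : Fin d => Icc (-(k : ℤ)) k | eval x G ∈ Icc (-|N|) |N|} *
        #(Icc (-(k : ℤ)) k) := by
        rw [hbox, ← Nat.card_eq_finsetCard]
        exact Nat.mul_le_mul_right _ (Nat.card_mono (finite_toSet _) hsub)
    _ ≤ _ := by
      rw [← hbox]
      exact card_filter_eval_mem_mul_card_le hG _ _

/-- If nonzero `F_1, …, F_h ∈ ℤ[x_1,…,x_d]` are not relatively prime in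
`ℚ[x_1,…,x_d]` (some prime element divides all of them), then the density of
integer vectors `x` with `gcd(F_1(x), …, F_h(x)) = 1` is 0. -/
theorem stmt1 (d h : ℕ) (hd : 0 < d) (hh : 0 < h)
    (F : Fin h → MvPolynomial (Fin d) ℤ) (hF : ∀ j, F j ≠ 0)
    (hncop : ∃ q : MvPolynomial (Fin d) ℚ, Prime q ∧
      ∀ j, q ∣ MvPolynomial.map (Int.castRingHom ℚ) (F j)) :
    Tendsto (fun k : ℕ =>
      (Nat.card {x : Fin d → ℤ //
          (∀ t, x t ∈ Set.Icc (-(k : ℤ)) (k : ℤ)) ∧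
          Finset.gcd Finset.univ (fun j => eval x (F j)) = 1} : ℝ)
        / (2 * (k : ℝ) + 1) ^ d) atTop (nhds 0) :=
  stmt1_general d h F hncop
end

section
/- Let d be a positive integer, h ≥ 2, and let G_1,…,G_h ∈ ℚ[x_1,…,x_d] be nonzero polynomials that are relatively prime in ℚ[x_1,…,x_d]. Then there exist integers v_3,…,v_h such that every common divisor of G_1 and G_2 + Σ_{i=3}^{h} v_i·G_i in ℚ[x_1,…,x_d] is a unit. -/
/-!
Take `v_i = t^i` for an integer `t`, so that `G_2 + ∑ v_i G_i` is the value at `t` of the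
polynomial `P(X) = G_2 + ∑_{i ≥ 3} G_i X^i` with coefficients in `ℚ[x_1,…,x_d]`. For a prime
factor `q` of `G_1`, the reduction of `P` modulo `q` is a nonzero polynomial over the domain
`ℚ[x_1,…,x_d]/(q)`, because `q` does not divide all the `G_j`. It therefore has finitely many
roots, and since this domain has characteristic zero, `q ∣ P(t)` for only finitely many `t`.
`G_1` has finitely many prime factors up to association, so some `t` avoids all of them.
-/

open Polynomial UniqueFactorizationMonoid

theorem Prime.finite_setOf_dvd_eval_intCast {R : Type*} [CommRing R] [Algebra ℚ R] {q : R}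
    (hq : Prime q) {P : R[X]} (hP : ∃ n, ¬ q ∣ P.coeff n) :
    {t : ℤ | q ∣ P.eval (t : R)}.Finite := by
  have : (Ideal.span {q}).IsPrime := (Ideal.span_singleton_prime hq.ne_zero).mpr hq
  have : CharZero (R ⧸ Ideal.span {q}) := algebraRat.charZero _
  let mk := Ideal.Quotient.mk (Ideal.span {q})
  have hP' : P.map mk ≠ 0 := by
    obtain ⟨n, hn⟩ := hP
    refine ne_of_apply_ne (coeff · n) ?_
    simpa [mk, Ideal.Quotient.eq_zero_iff_dvd] using hn
  refine ((P.map mk).finite_setOfPred_isRoot hP').preimage Int.cast_injective.injOn |>.subset ?_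
  intro t ht
  simpa [IsRoot, eval_intCast_map, mk, Ideal.Quotient.eq_zero_iff_dvd] using ht

theorem exists_int_isRelPrime_eval {R : Type*} [CommRing R] [IsDomain R]
    [UniqueFactorizationMonoid R] [Algebra ℚ R] {a : R} (ha : a ≠ 0) {P : R[X]}
    (hP : ∀ q, Prime q → q ∣ a → ∃ n, ¬ q ∣ P.coeff n) :
    ∃ t : ℤ, IsRelPrime a (P.eval (t : R)) := by
  classical
  have hbad : (⋃ q ∈ (factors a).toFinset, {t : ℤ | q ∣ P.eval (t : R)}).Finite := by
    refine Set.Finite.biUnion (Finset.finite_toSet _) fun q hq => ?_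
    rw [Finset.mem_coe, Multiset.mem_toFinset] at hq
    exact (prime_of_factor q hq).finite_setOf_dvd_eval_intCast
      (hP q (prime_of_factor q hq) (dvd_of_mem_factors hq))
  obtain ⟨t, ht⟩ := hbad.infinite_compl.nonempty
  refine ⟨t, (isRelPrime_iff_no_prime_factors ha).mpr fun p hpa hpP hp => ht ?_⟩
  obtain ⟨q, hq, hpq⟩ := exists_mem_factors_of_dvd ha hp.irreducible hpa
  exact Set.mem_biUnion (Multiset.mem_toFinset.mpr hq) (hpq.symm.dvd.trans hpP)

section SparsePolynomial

variable {R ι : Type*} [Semiring R] (a : R) {s : Finset ι} (f : ι → R) {e : ι → ℕ}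

theorem coeff_C_add_sum_C_mul_X_pow_zero (he : ∀ i ∈ s, e i ≠ 0) :
    (C a + ∑ i ∈ s, C (f i) * X ^ e i).coeff 0 = a := by
  simp only [coeff_add, coeff_C_zero, finsetSum_coeff, coeff_C_mul_X_pow]
  rw [Finset.sum_eq_zero fun i hi => if_neg (he i hi).symm, add_zero]

theorem coeff_C_add_sum_C_mul_X_pow_of_mem (he : Set.InjOn e s) {j : ι} (hj : j ∈ s)
    (hj0 : e j ≠ 0) : (C a + ∑ i ∈ s, C (f i) * X ^ e i).coeff (e j) = f j := by
  simp only [coeff_add, coeff_C, finsetSum_coeff, coeff_C_mul_X_pow, if_neg hj0, zero_add]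
  rw [Finset.sum_eq_single_of_mem j hj fun i hi hij => if_neg ?_, if_pos rfl]
  exact fun h => hij (he hi hj h.symm)

end SparsePolynomial

/-- If `G_1, …, G_h ∈ ℚ[x_1,…,x_d]` (`h ≥ 2`) are nonzero and relatively
prime, then there exist integers `v_3, …, v_h` such that every common divisor
of `G_1` and `G_2 + ∑_{i=3}^{h} v_i·G_i` is a unit. -/
theorem stmt4 (d h : ℕ) (hh : 2 ≤ h)
    (G : Fin h → MvPolynomial (Fin d) ℚ) (hG : ∀ j, G j ≠ 0)
    (hcop : ¬ ∃ q : MvPolynomial (Fin d) ℚ, Prime q ∧ ∀ j, q ∣ G j) :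
    ∃ v : Fin h → ℤ, ∀ e : MvPolynomial (Fin d) ℚ,
      e ∣ G ⟨0, by omega⟩ →
      e ∣ (G ⟨1, by omega⟩ +
        ∑ i ∈ Finset.univ.filter (fun i : Fin h => 2 ≤ (i : ℕ)),
          (v i : ℚ) • G i) →
      IsUnit e := by
  set S := Finset.univ.filter (fun i : Fin h => 2 ≤ (i : ℕ))
  set P := C (G ⟨1, by omega⟩) + ∑ i ∈ S, C (G i) * X ^ (i : ℕ) with hP_def
  have hS : ∀ i ∈ S, (i : ℕ) ≠ 0 := fun i hi => by simp [S] at hi; omega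
  have hP : ∀ q, Prime q → q ∣ G ⟨0, by omega⟩ → ∃ n, ¬ q ∣ P.coeff n := by
    intro q hq hq0
    by_contra! hall
    refine hcop ⟨q, hq, fun j => ?_⟩
    obtain hj | hj | hj : (j : ℕ) = 0 ∨ (j : ℕ) = 1 ∨ 2 ≤ (j : ℕ) := by omega
    · rwa [show j = ⟨0, by omega⟩ from Fin.ext hj]
    · rw [show j = ⟨1, by omega⟩ from Fin.ext hj]
      simpa [hP_def, coeff_C_add_sum_C_mul_X_pow_zero _ G hS] using hall 0
    · have hjS : j ∈ S := by simpa [S] using hj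
      simpa [hP_def, coeff_C_add_sum_C_mul_X_pow_of_mem _ G Fin.val_injective.injOn hjS (hS j hjS)]
        using hall j
  obtain ⟨t, ht⟩ := exists_int_isRelPrime_eval (hG _) hP
  refine ⟨fun i => t ^ (i : ℕ), fun e he0 he1 => ht he0 ?_⟩
  convert he1 using 1
  simp only [P, eval_add, eval_C, eval_finsetSum, eval_mul, eval_pow, eval_X]
  refine congrArg _ (Finset.sum_congr rfl fun i _ => ?_)
  rw [Int.cast_smul_eq_zsmul, zsmul_eq_mul, mul_comm]
  push_cast
  rfl
end

section
/- Let d be a positive integer, G ∈ ℤ[x_1,…,x_d] a nonzero polynomial, and p a prime. Define σ_p := p^{−d} · #{x ∈ (ℤ/pℤ)^d : G(x) = 0 in ℤ/pℤ} and, for a positive integer k, σ_p^{(k)} := (2k+1)^{−d} · #{x ∈ Box(k)^d : p divides G(x)}. Then σ_p^{(k)} → σ_p as k → ∞, and σ_p^{(k)} ≤ 2^d · σ_p for every k with 2k+1 > p. -/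
/-! Whether `p ∣ G(x)` depends only on the residues of the coordinates of `x` mod `p`, so the
count over `Box(k)^d` is a sum, over the zeros `r` of `G` mod `p`, of products over the coordinates
of the number of integers in `Box(k)` congruent to `r t`. Each of these numbers is `(2k+1)/p` up
to an error less than `1`: this gives the limit, and the bound `2(2k+1)/p` once `2k+1 ≥ p`. -/

open Filter MvPolynomial Finset

theorem Finset.card_filter_piFinset_comp_mem {ι α β : Type*} [Fintype ι] [DecidableEq ι]
    [DecidableEq β] (s : ι → Finset α) (f : α → β) (S : Finset (ι → β)) :
    #{x ∈ Fintype.piFinset s | f ∘ x ∈ S} = ∑ r ∈ S, ∏ i, #{y ∈ s i | f y = r i} := by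
  refine (card_eq_sum_card_fiberwise (f := (f ∘ ·)) fun x hx => (mem_filter.mp hx).2).trans ?_
  refine sum_congr rfl fun r hr => ?_
  rw [← Fintype.card_piFinset]
  congr 1
  ext x
  simp only [mem_filter, Fintype.mem_piFinset, funext_iff, Function.comp_apply]
  constructor
  · rintro ⟨⟨hs, -⟩, hf⟩ i
    exact ⟨hs i, hf i⟩
  · intro h
    have hx : f ∘ x = r := funext fun i => (h i).2
    exact ⟨⟨fun i => (h i).1, hx ▸ hr⟩, fun i => (h i).2⟩

theorem MvPolynomial.intCast_eval {σ R : Type*} [CommRing R] (x : σ → ℤ)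
    (G : MvPolynomial σ ℤ) :
    ((eval x G : ℤ) : R) = aeval (fun t => (x t : R)) G := by
  simpa [coe_aeval_eq_eval, Function.comp_def] using (aeval_algebraMap_apply R x G).symm

theorem Int.abs_card_filter_intCast_eq_Ico_sub_lt {p : ℕ} [NeZero p] (a : ZMod p) (m : ℤ)
    (n : ℕ) :
    |(#{x ∈ Ico m (m + n) | ((x : ℤ) : ZMod p) = a} : ℚ) - n / p| < 1 := by
  have hp : (0 : ℤ) < p := by exact_mod_cast NeZero.pos p
  set v : ℤ := (a.cast : ℤ)
  have hfilter : {x ∈ Ico m (m + n) | ((x : ℤ) : ZMod p) = a} =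
      {x ∈ Ico m (m + n) | x ≡ v [ZMOD p]} := by
    refine filter_congr fun x _ => ?_
    rw [← ZMod.intCast_eq_intCast_iff, ZMod.intCast_zmod_cast]
  set A : ℚ := (m - v) / p
  set B : ℚ := (m + n - v) / p
  have hBA : B = A + n / p := by ring
  have hcard : (#{x ∈ Ico m (m + n) | x ≡ v [ZMOD p]} : ℤ) = ⌈B⌉ - ⌈A⌉ := by
    rw [Int.Ico_filter_modEq_card _ _ hp]
    push_cast
    exact max_eq_left (sub_nonneg.mpr (Int.ceil_mono (by gcongr; simp)))
  rw [hfilter, ← Int.cast_natCast, hcard, abs_sub_lt_iff]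
  push_cast
  constructor <;>
    linarith [Int.ceil_lt_add_one A, Int.le_ceil A, Int.ceil_lt_add_one B, Int.le_ceil B]

theorem Int.abs_card_filter_intCast_eq_Icc_sub_lt {p : ℕ} [NeZero p] (a : ZMod p) (k : ℕ) :
    |(#{x ∈ Icc (-(k : ℤ)) k | ((x : ℤ) : ZMod p) = a} : ℝ) - (2 * k + 1) / p| < 1 := by
  have hIcc : Icc (-(k : ℤ)) k = Ico (-(k : ℤ)) (-k + (2 * k + 1 : ℕ)) := by
    ext x; simp only [mem_Icc, mem_Ico]; omega
  have h := Int.abs_card_filter_intCast_eq_Ico_sub_lt a (-k) (2 * k + 1)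
  rw [← hIcc, ← Rat.cast_lt (K := ℝ)] at h
  push_cast at h
  exact h

theorem Int.tendsto_card_filter_intCast_eq_Icc_div {p : ℕ} [NeZero p] (a : ZMod p) :
    Tendsto (fun k : ℕ => (#{x ∈ Icc (-(k : ℤ)) k | ((x : ℤ) : ZMod p) = a} : ℝ) / (2 * k + 1))
      atTop (nhds (1 / p)) := by
  have hlen : Tendsto (fun k : ℕ => (2 * k + 1 : ℝ)⁻¹) atTop (nhds 0) :=
    ((tendsto_natCast_atTop_atTop.const_mul_atTop two_pos).atTop_add
      tendsto_const_nhds).inv_tendsto_atTop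
  refine tendsto_iff_norm_sub_tendsto_zero.2
    (squeeze_zero (fun _ => norm_nonneg _) (fun k => ?_) hlen)
  have hk : (0 : ℝ) < 2 * k + 1 := by positivity
  have hp : (0 : ℝ) < p := by exact_mod_cast NeZero.pos p
  have hsub : ∀ c : ℝ, c / (2 * k + 1) - 1 / p = (c - (2 * k + 1) / p) / (2 * k + 1) := by
    intro c; field_simp
  rw [Real.norm_eq_abs, hsub, abs_div, abs_of_pos hk, div_eq_mul_inv]
  exact mul_le_of_le_one_left (by positivity) (Int.abs_card_filter_intCast_eq_Icc_sub_lt a k).le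

theorem Int.card_filter_intCast_eq_Icc_div_le {p : ℕ} [NeZero p] (a : ZMod p) {k : ℕ}
    (hk : p ≤ 2 * k + 1) :
    (#{x ∈ Icc (-(k : ℤ)) k | ((x : ℤ) : ZMod p) = a} : ℝ) / (2 * k + 1) ≤ 2 / p := by
  have hp : (0 : ℝ) < p := by exact_mod_cast NeZero.pos p
  have hk' : (p : ℝ) ≤ 2 * k + 1 := by exact_mod_cast hk
  have h := (abs_lt.mp (Int.abs_card_filter_intCast_eq_Icc_sub_lt a k)).2
  have hcancel : (2 * k + 1) / p * p = (2 * k + 1 : ℝ) := div_mul_cancel₀ _ hp.ne'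
  rw [div_le_div_iff₀ (by positivity) hp]
  nlinarith

theorem card_box_dvd_eval_div_pow_eq_sum_prod {σ : Type*} [Fintype σ] [DecidableEq σ] {p : ℕ}
    [NeZero p] (G : MvPolynomial σ ℤ) (k : ℕ) :
    (Nat.card {x : σ → ℤ // (∀ t, x t ∈ Set.Icc (-(k : ℤ)) k) ∧ (p : ℤ) ∣ eval x G} : ℝ) /
        (2 * k + 1) ^ Fintype.card σ =
      ∑ r : σ → ZMod p with aeval r G = 0,
        ∏ t, (#{x ∈ Icc (-(k : ℤ)) k | ((x : ℤ) : ZMod p) = r t} : ℝ) / (2 * k + 1) := by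
  have hcard : Nat.card {x : σ → ℤ // (∀ t, x t ∈ Set.Icc (-(k : ℤ)) k) ∧ (p : ℤ) ∣ eval x G} =
      #{x ∈ Fintype.piFinset fun _ => Icc (-(k : ℤ)) k |
        ((↑) : ℤ → ZMod p) ∘ x ∈ ({r | aeval r G = 0} : Finset (σ → ZMod p))} := by
    rw [← Nat.card_eq_finsetCard]
    refine Nat.card_congr (Equiv.subtypeEquivRight fun x => ?_)
    simp only [mem_filter, Fintype.mem_piFinset, mem_Icc, Set.mem_Icc, mem_univ, true_and,
      Function.comp_def, ← MvPolynomial.intCast_eval, ZMod.intCast_zmod_eq_zero_iff_dvd]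
  rw [hcard, card_filter_piFinset_comp_mem]
  push_cast
  rw [sum_div]
  refine sum_congr rfl fun r _ => ?_
  rw [prod_div_distrib, prod_const, card_univ]

theorem stmt6_general (d : ℕ) (G : MvPolynomial (Fin d) ℤ)
    (p : ℕ) (hp : p.Prime) :
    Tendsto (fun k : ℕ =>
        (Nat.card {x : Fin d → ℤ //
            (∀ t, x t ∈ Set.Icc (-(k : ℤ)) (k : ℤ)) ∧ (p : ℤ) ∣ eval x G} : ℝ)
          / (2 * (k : ℝ) + 1) ^ d) atTop
      (nhds ((Nat.card {x : Fin d → ZMod p // aeval x G = 0} : ℝ) / (p : ℝ) ^ d)) ∧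
    ∀ k : ℕ, p < 2 * k + 1 →
      (Nat.card {x : Fin d → ℤ //
          (∀ t, x t ∈ Set.Icc (-(k : ℤ)) (k : ℤ)) ∧ (p : ℤ) ∣ eval x G} : ℝ)
        / (2 * (k : ℝ) + 1) ^ d ≤
      2 ^ d * ((Nat.card {x : Fin d → ZMod p // aeval x G = 0} : ℝ) / (p : ℝ) ^ d) := by
  have : NeZero p := ⟨hp.ne_zero⟩
  have hbox := card_box_dvd_eval_div_pow_eq_sum_prod (p := p) G
  rw [Fintype.card_fin] at hbox
  have hzeros : ∀ c : ℝ, c ^ d * ((Nat.card {x : Fin d → ZMod p // aeval x G = 0} : ℝ) / p ^ d) =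
      ∑ r : Fin d → ZMod p with aeval r G = 0, ∏ _t : Fin d, c / p := by
    intro c
    rw [Nat.card_eq_fintype_card, Fintype.card_subtype]
    simp only [prod_const, card_univ, Fintype.card_fin, sum_const, nsmul_eq_mul, div_pow]
    ring
  simp_rw [hbox]
  constructor
  · have hlimit := hzeros 1
    rw [one_pow, one_mul] at hlimit
    rw [hlimit]
    exact tendsto_finsetSum _ fun r _ => tendsto_finsetProd _ fun t _ =>
      Int.tendsto_card_filter_intCast_eq_Icc_div (r t)
  · intro k hk
    rw [hzeros]
    exact sum_le_sum fun r _ => prod_le_prod (fun _ _ => by positivity) fun t _ =>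
      Int.card_filter_intCast_eq_Icc_div_le (r t) hk.le

/-- For a nonzero `G ∈ ℤ[x_1,…,x_d]` and a prime `p`, the box proportion
`σ_p^{(k)}` of `x ∈ Box(k)^d` with `p ∣ G(x)` converges, as `k → ∞`, to the
proportion `σ_p` of zeros of `G` in `(ℤ/pℤ)^d`, and `σ_p^{(k)} ≤ 2^d·σ_p`
whenever `2k + 1 > p`. -/
theorem stmt6 (d : ℕ) (hd : 0 < d) (G : MvPolynomial (Fin d) ℤ) (hG : G ≠ 0)
    (p : ℕ) (hp : p.Prime) :
    Tendsto (fun k : ℕ =>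
        (Nat.card {x : Fin d → ℤ //
            (∀ t, x t ∈ Set.Icc (-(k : ℤ)) (k : ℤ)) ∧ (p : ℤ) ∣ eval x G} : ℝ)
          / (2 * (k : ℝ) + 1) ^ d) atTop
      (nhds ((Nat.card {x : Fin d → ZMod p // aeval x G = 0} : ℝ) / (p : ℝ) ^ d)) ∧
    ∀ k : ℕ, p < 2 * k + 1 →
      (Nat.card {x : Fin d → ℤ //
          (∀ t, x t ∈ Set.Icc (-(k : ℤ)) (k : ℤ)) ∧ (p : ℤ) ∣ eval x G} : ℝ)
        / (2 * (k : ℝ) + 1) ^ d ≤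
      2 ^ d * ((Nat.card {x : Fin d → ZMod p // aeval x G = 0} : ℝ) / (p : ℝ) ^ d) :=
  stmt6_general d G p hp
end

section
/- Let n be a positive integer and c an integer. Then lim_{k→∞} (2k+1)^{−n²} · #{M : M is an n×n matrix with all entries in Box(k) and det(M) = c} = 0; in words, the density of the determinant of a random n×n integer matrix at any fixed value is 0. -/
/-!
Expanding along the first row, `det M = M₀₀ · det M' + (terms free of M₀₀)`, where `M'` is the
lower-right minor. If `det M' ≠ 0`, the entry `M₀₀` is determined by `det M` and the other
entries, so at most `|S| ^ (n² - 1)` matrices with entries in `S` have a given determinant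
this way; otherwise `M'` is a singular `(n - 1) × (n - 1)` matrix. Hence the density of the
determinant at `c` in size `n` is at most `1 / |S|` plus its density at `0` in size `n - 1`,
and induction on `n` finishes as `|S| → ∞`.
-/

open Filter Finset Matrix

section

variable {R : Type*}

def boxMatrices (n : ℕ) (S : Finset R) : Finset (Matrix (Fin n) (Fin n) R) :=
  (Fintype.piFinset fun _ => Fintype.piFinset fun _ => S).map Matrix.of.toEmbedding

theorem mem_boxMatrices {n : ℕ} {S : Finset R} {M : Matrix (Fin n) (Fin n) R} :
    M ∈ boxMatrices n S ↔ ∀ i j, M i j ∈ S := by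
  simp [boxMatrices, mem_map_equiv]

theorem card_boxMatrices (n : ℕ) (S : Finset R) : #(boxMatrices n S) = #S ^ (n ^ 2) := by
  simp [boxMatrices, ← pow_mul, sq]

def Matrix.cornerSplit {m : ℕ} (M : Matrix (Fin (m + 1)) (Fin (m + 1)) R) :
    R × ((Fin m → R) × (Fin m → R)) × Matrix (Fin m) (Fin m) R :=
  (M 0 0, (fun j => M 0 j.succ, fun i => M i.succ 0), M.submatrix Fin.succ Fin.succ)

theorem Matrix.cornerSplit_injective {m : ℕ} :
    Function.Injective (cornerSplit : Matrix (Fin (m + 1)) (Fin (m + 1)) R → _) := by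
  intro M N h
  simp only [cornerSplit, Prod.mk.injEq] at h
  obtain ⟨h00, ⟨hrow, hcol⟩, hminor⟩ := h
  ext i j
  cases i using Fin.cases <;> cases j using Fin.cases
  · exact h00
  · exact congrFun hrow _
  · exact congrFun hcol _
  · exact congrFun₂ hminor _ _

end

section

variable {R : Type*} [CommRing R]

theorem Matrix.det_sub_det_of_cornerSplit_snd_eq {m : ℕ}
    {M N : Matrix (Fin (m + 1)) (Fin (m + 1)) R} (h : M.cornerSplit.2 = N.cornerSplit.2) :
    M.det - N.det = (M 0 0 - N 0 0) * (M.submatrix Fin.succ Fin.succ).det := by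
  simp only [cornerSplit, Prod.mk.injEq] at h
  obtain ⟨⟨hrow, hcol⟩, hminor⟩ := h
  have hlower : ∀ i : Fin m, M i.succ = N i.succ := fun i => by
    ext j
    cases j using Fin.cases
    · exact congrFun hcol i
    · exact congrFun₂ hminor i _
  have hminors : ∀ j : Fin (m + 1),
      M.submatrix Fin.succ j.succAbove = N.submatrix Fin.succ j.succAbove := fun j => by
    ext i k
    simp [hlower]
  rw [det_succ_row_zero M, det_succ_row_zero N, ← sum_sub_distrib, Fin.sum_univ_succ,
    Finset.sum_eq_zero fun j _ => by rw [congrFun hrow j, hminors]; ring]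
  simp [Fin.succAbove_zero, ← hminor]
  ring

end

section

variable {R : Type*} [CommRing R] [DecidableEq R]

def detFiber (n : ℕ) (S : Finset R) (c : R) : Finset (Matrix (Fin n) (Fin n) R) :=
  (boxMatrices n S).filter (·.det = c)

theorem mem_detFiber {n : ℕ} {S : Finset R} {c : R} {M : Matrix (Fin n) (Fin n) R} :
    M ∈ detFiber n S c ↔ (∀ i j, M i j ∈ S) ∧ M.det = c := by
  rw [detFiber, mem_filter, mem_boxMatrices]

theorem detFiber_zero_zero [Nontrivial R] (S : Finset R) : detFiber 0 S 0 = ∅ := by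
  ext M
  simp [mem_detFiber]

theorem card_detFiber_succ_le [IsDomain R] (m : ℕ) (S : Finset R) (c : R) :
    #(detFiber (m + 1) S c) ≤ #S ^ (m ^ 2 + 2 * m) + #S ^ (2 * m + 1) * #(detFiber m S 0) := by
  set Fiber := detFiber (m + 1) S c
  set Borders := (Fintype.piFinset fun _ : Fin m => S) ×ˢ (Fintype.piFinset fun _ : Fin m => S)
  have hborder : ∀ M ∈ Fiber, M.cornerSplit.2.1 ∈ Borders := by
    intro M hM
    rw [mem_detFiber] at hM
    simp [Borders, cornerSplit, hM]
  have hregular : #(Fiber.filter fun M => (M.submatrix Fin.succ Fin.succ).det ≠ 0) ≤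
      #S ^ (m ^ 2 + 2 * m) := by
    calc _ ≤ #(Borders ×ˢ boxMatrices m S) := by
          refine card_le_card_of_injOn (fun M => M.cornerSplit.2) (fun M hM => ?_) ?_
          · simp only [coe_filter, Set.mem_ofPred_eq, mem_coe, mem_product] at hM ⊢
            exact ⟨hborder M hM.1, mem_boxMatrices.2 fun i j => (mem_detFiber.1 hM.1).1 _ _⟩
          · intro M hM N hN h
            simp only [coe_filter, Set.mem_ofPred_eq, Fiber, mem_detFiber] at hM hN
            have hdet := det_sub_det_of_cornerSplit_snd_eq h
            rw [hM.1.2, hN.1.2, sub_self, zero_eq_mul] at hdet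
            exact cornerSplit_injective (Prod.ext (sub_eq_zero.1 (hdet.resolve_right hM.2)) h)
      _ = _ := by simp [Borders, card_product, card_boxMatrices]; ring
  have hsingular : #(Fiber.filter fun M => (M.submatrix Fin.succ Fin.succ).det = 0) ≤
      #S ^ (2 * m + 1) * #(detFiber m S 0) := by
    calc _ ≤ #(S ×ˢ Borders ×ˢ detFiber m S 0) := by
          refine card_le_card_of_injOn cornerSplit (fun M hM => ?_) cornerSplit_injective.injOn
          simp only [coe_filter, Set.mem_ofPred_eq, mem_coe, mem_product] at hM ⊢
          have hentries := (mem_detFiber.1 hM.1).1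
          exact ⟨hentries 0 0, hborder M hM.1, mem_detFiber.2 ⟨fun i j => hentries _ _, hM.2⟩⟩
      _ = _ := by simp [Borders, card_product]; ring
  rw [← card_filter_add_card_filter_not (fun M => (M.submatrix Fin.succ Fin.succ).det = 0)]
  linarith

end

section

variable {R : Type*} [CommRing R] [IsDomain R] [DecidableEq R]

noncomputable def detDensity (n : ℕ) (S : Finset R) (c : R) : ℝ :=
  #(detFiber n S c) / (#S : ℝ) ^ (n ^ 2)

theorem detDensity_succ_le {m : ℕ} {S : Finset R} (hS : S.Nonempty) (c : R) :
    detDensity (m + 1) S c ≤ (#S : ℝ)⁻¹ + detDensity m S 0 := by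
  have hB : (0 : ℝ) < #S := mod_cast hS.card_pos
  have hcard : (#(detFiber (m + 1) S c) : ℝ) ≤
      #S ^ (m ^ 2 + 2 * m) + #S ^ (2 * m + 1) * #(detFiber m S 0) :=
    mod_cast card_detFiber_succ_le m S c
  rw [detDensity, detDensity, div_le_iff₀ (by positivity)]
  calc _ ≤ _ := hcard
    _ = _ := by field_simp; ring

variable {ι : Type*} {l : Filter ι} {S : ι → Finset R}

theorem tendsto_detDensity_succ (hS : Tendsto (fun i => #(S i)) l atTop) {m : ℕ}
    (hm : Tendsto (fun i => detDensity m (S i) 0) l (nhds 0)) (c : R) :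
    Tendsto (fun i => detDensity (m + 1) (S i) c) l (nhds 0) := by
  have hinv : Tendsto (fun i => (#(S i) : ℝ)⁻¹) l (nhds 0) :=
    tendsto_inv_atTop_zero.comp (tendsto_natCast_atTop_atTop.comp hS)
  refine squeeze_zero' (.of_forall fun i => by unfold detDensity; positivity) ?_
    (by simpa using hinv.add hm)
  filter_upwards [hS.eventually_gt_atTop 0] with i hi
  exact detDensity_succ_le (card_pos.1 hi) c

theorem tendsto_detDensity_zero (hS : Tendsto (fun i => #(S i)) l atTop) :
    ∀ m, Tendsto (fun i => detDensity m (S i) 0) l (nhds 0)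
  | 0 => by simpa [detDensity, detFiber_zero_zero] using tendsto_const_nhds
  | m + 1 => tendsto_detDensity_succ hS (tendsto_detDensity_zero hS m) 0

theorem tendsto_detDensity (hS : Tendsto (fun i => #(S i)) l atTop) {n : ℕ} (hn : 0 < n)
    (c : R) : Tendsto (fun i => detDensity n (S i) c) l (nhds 0) := by
  obtain ⟨m, rfl⟩ : ∃ m, n = m + 1 := ⟨n - 1, by omega⟩
  exact tendsto_detDensity_succ hS (tendsto_detDensity_zero hS m) c

end

/-- The density of the determinant of a random `n × n` integer matrix at any
fixed value `c` is 0. -/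
theorem stmt10 (n : ℕ) (hn : 0 < n) (c : ℤ) :
    Tendsto (fun k : ℕ =>
      (Nat.card {M : Matrix (Fin n) (Fin n) ℤ //
          (∀ i j, M i j ∈ Set.Icc (-(k : ℤ)) (k : ℤ)) ∧ M.det = c} : ℝ)
        / (2 * (k : ℝ) + 1) ^ (n ^ 2)) atTop (nhds 0) := by
  set box := fun k : ℕ => Icc (-(k : ℤ)) k
  have hbox : ∀ k, #(box k) = 2 * k + 1 := fun k => by simp [box]; omega
  have hcount : ∀ k : ℕ, Nat.card {M : Matrix (Fin n) (Fin n) ℤ //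
      (∀ i j, M i j ∈ Set.Icc (-(k : ℤ)) (k : ℤ)) ∧ M.det = c} = #(detFiber n (box k) c) :=
    fun k => by
      rw [← Nat.card_eq_finsetCard]
      exact Nat.card_congr (Equiv.subtypeEquivRight fun M => by simp [mem_detFiber, box])
  have hS : Tendsto (fun k => #(box k)) atTop atTop :=
    tendsto_atTop_mono (fun k => by simp only [hbox, id]; omega) tendsto_id
  refine (tendsto_detDensity hS hn c).congr fun k => ?_
  rw [detDensity, hcount, hbox]
  push_cast
  ring
end

section
/- Let m ≤ n be positive integers. Then lim_{k→∞} (2k+1)^{−nm} · #{M : M is an n×m matrix with all entries in Box(k) and M has rank m (equivalently, some m×m minor of M is nonzero)} = 1; in words, a random n×m integer matrix is of full rank with probability 1. -/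
/-!
The determinant of the top `m × m` block of `M` is a nonzero polynomial of total degree `m` in
the entries of `M`, so by the Schwartz–Zippel lemma it vanishes on at most a fraction
`m / (2k + 1)` of the box; every other matrix of the box has a nonzero `m × m` minor.
-/

open Filter Finset MvPolynomial

namespace MvPolynomial

variable {R σ : Type*} [CommRing R] [IsDomain R] [DecidableEq R] [Fintype σ] [DecidableEq σ]

theorem schwartz_zippel_totalDegree_fintype {p : MvPolynomial σ R} (hp : p ≠ 0) (S : Finset R) :
    #{x ∈ Fintype.piFinset fun _ : σ => S | eval x p = 0} * #S ≤
      p.totalDegree * #S ^ Fintype.card σ := by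
  set e := Fintype.equivFin σ
  have hq : rename e p ≠ 0 := fun h => hp (rename_injective _ e.injective (by simpa using h))
  have hcard : #{x ∈ Fintype.piFinset fun _ : σ => S | eval x p = 0} =
      #{y ∈ Fintype.piFinset fun _ : Fin (Fintype.card σ) => S | eval y (rename e p) = 0} := by
    refine card_nbij' (· ∘ e.symm) (· ∘ e) ?_ ?_ ?_ ?_ <;> intro x hx <;>
      simp_all [Function.comp_def, eval_rename]
  obtain rfl | hS := S.eq_empty_or_nonempty
  · simp
  have hsz := schwartz_zippel_totalDegree hq S
  rw [div_le_div_iff₀ (by positivity) (by simpa using hS)] at hsz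
  have hdeg : ((rename e p).totalDegree : ℚ≥0) ≤ p.totalDegree := by
    exact_mod_cast totalDegree_rename_le _ _
  rw [hcard]
  exact_mod_cast hsz.trans (mul_le_mul_of_nonneg_right hdeg (by positivity))

end MvPolynomial

namespace Matrix

theorem isHomogeneous_det_mvPolynomialX (κ R : Type*) [Fintype κ] [DecidableEq κ] [CommRing R] :
    (det (mvPolynomialX κ κ R)).IsHomogeneous (Fintype.card κ) := by
  rw [det_apply']
  refine IsHomogeneous.sum _ _ _ fun σ _ => ?_
  have hsign : ((Equiv.Perm.sign σ : ℤ) : MvPolynomial (κ × κ) R).IsHomogeneous 0 := by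
    simpa using isHomogeneous_C (κ × κ) ((Equiv.Perm.sign σ : ℤ) : R)
  simpa using hsign.mul (IsHomogeneous.prod univ
    (fun i => mvPolynomialX κ κ R (σ i) i) (fun _ => 1) fun i _ => isHomogeneous_X R (σ i, i))

variable {ι κ R : Type*} [Fintype ι] [DecidableEq ι] [Fintype κ] [DecidableEq κ]

variable (ι κ) in
def piFinset (S : Finset R) : Finset (Matrix ι κ R) :=
  Fintype.piFinset fun _ => Fintype.piFinset fun _ => S

theorem mem_piFinset {S : Finset R} {M : Matrix ι κ R} :
    M ∈ piFinset ι κ S ↔ ∀ i j, M i j ∈ S :=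
  Fintype.mem_piFinset.trans (forall_congr' fun _ => Fintype.mem_piFinset)

theorem card_piFinset (S : Finset R) :
    #(piFinset ι κ S) = #S ^ (Fintype.card ι * Fintype.card κ) := by
  unfold piFinset
  exact (Fintype.card_piFinset _).trans (by simp [Fintype.card_piFinset, ← pow_mul, mul_comm])

theorem natCard_subtype_forall_mem_and (S : Finset R) (P : Matrix ι κ R → Prop)
    [DecidablePred P] :
    Nat.card {M : Matrix ι κ R // (∀ i j, M i j ∈ (S : Set R)) ∧ P M} =
      #{M ∈ piFinset ι κ S | P M} := by
  rw [← Nat.card_eq_finsetCard]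
  exact Nat.card_congr (Equiv.subtypeEquivRight fun M => by simp [mem_piFinset])

theorem card_filter_det_submatrix_eq_zero_mul_le [CommRing R] [IsDomain R] [DecidableEq R]
    (S : Finset R) {e : κ → ι} (he : Function.Injective e) :
    #{M ∈ piFinset ι κ S | (M.submatrix e id).det = 0} * #S ≤
      Fintype.card κ * #S ^ (Fintype.card ι * Fintype.card κ) := by
  set p := rename (Prod.map e id) (det (mvPolynomialX κ κ R))
  have hp : p ≠ 0 := (map_ne_zero_iff _ (rename_injective _ (he.prodMap Function.injective_id))).2
    (det_mvPolynomialX_ne_zero κ R)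
  have heval (M : Matrix ι κ R) : eval (fun x => M x.1 x.2) p = (M.submatrix e id).det := by
    rw [eval_rename, eval_det_mvPolynomialX]
    rfl
  have hcard : #{M ∈ piFinset ι κ S | (M.submatrix e id).det = 0} =
      #{x ∈ Fintype.piFinset fun _ : ι × κ => S | eval x p = 0} := by
    refine card_nbij' (fun M x => M x.1 x.2) (fun x => of fun i j => x (i, j)) ?_ ?_
      (fun _ _ => rfl) (fun _ _ => rfl) <;> intro x hx <;> simp_all [mem_piFinset, ← heval]
  calc #{M ∈ piFinset ι κ S | (M.submatrix e id).det = 0} * #S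
      ≤ p.totalDegree * #S ^ Fintype.card (ι × κ) :=
        hcard ▸ schwartz_zippel_totalDegree_fintype hp S
    _ ≤ Fintype.card κ * #S ^ (Fintype.card ι * Fintype.card κ) := by
        rw [Fintype.card_prod]
        gcongr
        exact (isHomogeneous_det_mvPolynomialX κ R).rename_isHomogeneous.totalDegree_le

theorem card_mul_le_card_filter_exists_det_ne_zero_mul_add [CommRing R] [IsDomain R]
    [DecidableEq R] {m n : ℕ} (hmn : m ≤ n) (S : Finset R) :
    #S ^ (n * m) * #S ≤
      #{M ∈ piFinset (Fin n) (Fin m) S |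
        ∃ f : Fin m → Fin n, StrictMono f ∧ (M.submatrix f id).det ≠ 0} * #S +
      m * #S ^ (n * m) := by
  have hsplit := card_filter_add_card_filter_not (s := piFinset (Fin n) (Fin m) S)
    (fun M => (M.submatrix (Fin.castLE hmn) id).det ≠ 0)
  have hgood : #{M ∈ piFinset (Fin n) (Fin m) S | (M.submatrix (Fin.castLE hmn) id).det ≠ 0} ≤
      #{M ∈ piFinset (Fin n) (Fin m) S |
        ∃ f : Fin m → Fin n, StrictMono f ∧ (M.submatrix f id).det ≠ 0} :=
    card_le_card fun M hM => by
      rw [mem_filter] at hM ⊢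
      exact ⟨hM.1, _, Fin.strictMono_castLE hmn, hM.2⟩
  have hbad := card_filter_det_submatrix_eq_zero_mul_le S (Fin.castLE_injective hmn)
  have hbox := card_piFinset (ι := Fin n) (κ := Fin m) S
  simp only [Fintype.card_fin, not_not] at hsplit hbad hbox
  rw [← hbox, ← hsplit]
  nlinarith

end Matrix

theorem tendsto_div_of_le_of_mul_le_mul_add {a b N : ℕ → ℝ} {c : ℝ} (hN : Tendsto N atTop atTop)
    (hb : ∀ k, 0 < b k) (hab : ∀ k, a k ≤ b k) (hba : ∀ k, b k * N k ≤ a k * N k + c * b k) :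
    Tendsto (fun k => a k / b k) atTop (nhds 1) := by
  have hlim : Tendsto (fun k => 1 - c / N k) atTop (nhds 1) := by
    simpa using tendsto_const_nhds.sub (tendsto_const_nhds.div_atTop hN)
  refine tendsto_of_tendsto_of_tendsto_of_le_of_le' hlim tendsto_const_nhds ?_
    (Eventually.of_forall fun k => (div_le_one (hb k)).2 (hab k))
  filter_upwards [hN.eventually_gt_atTop 0] with k hk
  have hgap : b k - a k ≤ c * b k / N k := by
    rw [le_div_iff₀ hk]
    linarith [hba k]
  rw [le_div_iff₀ (hb k)]
  linarith [div_mul_eq_mul_div c (N k) (b k)]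

theorem stmt11_general (m n : ℕ) (hmn : m ≤ n) :
    Tendsto (fun k : ℕ =>
      (Nat.card {M : Matrix (Fin n) (Fin m) ℤ //
          (∀ i j, M i j ∈ Set.Icc (-(k : ℤ)) (k : ℤ)) ∧
          ∃ f : Fin m → Fin n, StrictMono f ∧ (M.submatrix f id).det ≠ 0} : ℝ)
        / (2 * (k : ℝ) + 1) ^ (n * m)) atTop (nhds 1) := by
  have hbox (k : ℕ) : ((#(Icc (-(k : ℤ)) k) : ℕ) : ℝ) = 2 * k + 1 := by
    rw [Int.card_Icc, show (k + 1 - -(k : ℤ)).toNat = 2 * k + 1 by omega]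
    push_cast
    ring
  refine tendsto_div_of_le_of_mul_le_mul_add (N := fun k : ℕ => 2 * (k : ℝ) + 1) (c := m)
    (tendsto_atTop_add_const_right _ 1 (tendsto_natCast_atTop_atTop.const_mul_atTop two_pos))
    (fun k => by positivity) (fun k => ?_) (fun k => ?_) <;>
    rw [← Finset.coe_Icc, Matrix.natCard_subtype_forall_mem_and, ← hbox]
  · refine (Nat.cast_le.2 (card_filter_le _ _)).trans_eq ?_
    rw [Matrix.card_piFinset, Fintype.card_fin, Fintype.card_fin, Nat.cast_pow]
  · exact_mod_cast Matrix.card_mul_le_card_filter_exists_det_ne_zero_mul_add hmn _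

/-- A random `n × m` integer matrix (`m ≤ n`) is of full rank (i.e. some
`m × m` minor is nonzero) with probability 1. -/
theorem stmt11 (m n : ℕ) (hm : 0 < m) (hmn : m ≤ n) :
    Tendsto (fun k : ℕ =>
      (Nat.card {M : Matrix (Fin n) (Fin m) ℤ //
          (∀ i j, M i j ∈ Set.Icc (-(k : ℤ)) (k : ℤ)) ∧
          ∃ f : Fin m → Fin n, StrictMono f ∧ (M.submatrix f id).det ≠ 0} : ℝ)
        / (2 * (k : ℝ) + 1) ^ (n * m)) atTop (nhds 1) :=
  stmt11_general m n hmn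
end

section
/- For an integer n ≥ 2, define Z_n := (∏_{i=2}^{n} ζ(i))^{−1} · ∏_{p prime} (1 + p^{−2} + p^{−3} + ⋯ + p^{−n}). Then the sequence (Z_n)_{n ≥ 2} is strictly decreasing: Z_{n+1} < Z_n for every n ≥ 2. -/
/-!
Write `S_n(p) = p⁻² + ⋯ + p⁻ⁿ` and `x = p^{-(n+1)}`. By the Euler product
`ζ(n+1) = ∏_p (1 - x)⁻¹`, the inequality `Z_{n+1} < Z_n` says
`∏_p (1 + S_n(p) + x) < ∏_p (1 - x)⁻¹ (1 + S_n(p))`, and this already holds factor by factor: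
`(1 - x)(1 + S_n(p) + x) = 1 + S_n(p) - x (S_n(p) + x) < 1 + S_n(p)`.
The strict inequality passes to the infinite products through their (summable) logarithms.
-/

/-- `Z_n = (∏_{i=2}^{n} ζ(i))⁻¹ · ∏_{p prime} (1 + p⁻² + p⁻³ + ⋯ + p⁻ⁿ)`. -/
noncomputable def Z (n : ℕ) : ℝ :=
  (∏ i ∈ Finset.Icc 2 n, ∑' j : ℕ+, ((j : ℝ) ^ i)⁻¹)⁻¹ *
    ∏' p : Nat.Primes, (1 + ∑ i ∈ Finset.Icc 2 n, (((p : ℕ) : ℝ) ^ i)⁻¹)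

open Finset Real

namespace Real

theorem tprod_lt_tprod_of_summable_log {ι : Type*} {f g : ι → ℝ} (hf : ∀ i, 0 < f i)
    (h : ∀ i, f i ≤ g i) {i : ι} (hi : f i < g i) (hf' : Summable fun i ↦ log (f i))
    (hg' : Summable fun i ↦ log (g i)) : ∏' i, f i < ∏' i, g i := by
  have hg i : 0 < g i := (hf i).trans_le (h i)
  rw [← rexp_tsum_eq_tprod hf hf', ← rexp_tsum_eq_tprod hg hg']
  exact exp_lt_exp.2 <|
    hf'.tsum_lt_tsum (fun i ↦ log_le_log (hf i) (h i)) (log_lt_log (hf i) hi) hg'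

theorem summable_log_inv_one_sub {ι : Type*} {x : ι → ℝ} (hx : Summable x) :
    Summable fun i ↦ log (1 - x i)⁻¹ := by
  simpa [sub_eq_add_neg] using (summable_log_one_add_of_summable hx.neg).neg

end Real

theorem summable_pnat_inv_pow {k : ℕ} (hk : 2 ≤ k) :
    Summable fun j : ℕ+ ↦ ((j : ℝ) ^ k)⁻¹ :=
  (summable_nat_pow_inv.2 hk).comp_injective PNat.coe_injective

theorem summable_primes_inv_pow {k : ℕ} (hk : 2 ≤ k) :
    Summable fun p : Nat.Primes ↦ ((p : ℝ) ^ k)⁻¹ :=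
  (summable_nat_pow_inv.2 hk).comp_injective Nat.Primes.coe_nat_injective

theorem tprod_primes_inv_one_sub_inv_pow {k : ℕ} (hk : 2 ≤ k) :
    ∏' p : Nat.Primes, (1 - ((p : ℝ) ^ k)⁻¹)⁻¹ = ∑' j : ℕ+, ((j : ℝ) ^ k)⁻¹ := by
  let f : ℕ →*₀ ℝ := invMonoidWithZeroHom.comp
    ((powMonoidWithZeroHom (by omega : k ≠ 0)).comp (Nat.castRingHom ℝ).toMonoidWithZeroHom)
  have hf : Summable (‖f ·‖) := (summable_nat_pow_inv.2 hk).norm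
  rw [tsum_pnat_eq_tsum_of_eq_zero (f := fun m : ℕ ↦ ((m : ℝ) ^ k)⁻¹)
    (by simp [zero_pow (by omega : k ≠ 0)])]
  exact EulerProduct.eulerProduct_completely_multiplicative_tprod hf

theorem one_add_add_lt_inv_one_sub_mul {s x : ℝ} (hs : 0 ≤ s) (hx₀ : 0 < x) (hx₁ : x < 1) :
    1 + (s + x) < (1 - x)⁻¹ * (1 + s) := by
  rw [lt_inv_mul_iff₀ (by linarith)]
  nlinarith

theorem tprod_one_add_add_lt_tprod_mul_tprod {ι : Type*} [Nonempty ι] {s x : ι → ℝ}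
    (hs : Summable s) (hx : Summable x) (hs₀ : ∀ i, 0 ≤ s i) (hx₀ : ∀ i, 0 < x i)
    (hx₁ : ∀ i, x i < 1) :
    ∏' i, (1 + (s i + x i)) < (∏' i, (1 - x i)⁻¹) * ∏' i, (1 + s i) := by
  have hpos₁ i : 0 < (1 - x i)⁻¹ := inv_pos.2 (sub_pos.2 (hx₁ i))
  have hpos₂ i : 0 < 1 + s i := by linarith [hs₀ i]
  have hlog₁ := summable_log_inv_one_sub hx
  have hlog₂ := summable_log_one_add_of_summable hs
  have hlt i := one_add_add_lt_inv_one_sub_mul (hs₀ i) (hx₀ i) (hx₁ i)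
  rw [← (multipliable_of_summable_log hpos₁ hlog₁).tprod_mul
    (multipliable_of_summable_log hpos₂ hlog₂)]
  refine tprod_lt_tprod_of_summable_log (fun i ↦ by linarith [hs₀ i, hx₀ i]) (fun i ↦ (hlt i).le)
    (hlt (Classical.arbitrary ι)) (summable_log_one_add_of_summable (hs.add hx)) ?_
  exact (hlog₁.add hlog₂).congr fun i ↦ (log_mul (hpos₁ i).ne' (hpos₂ i).ne').symm

theorem tprod_primes_one_add_sum_Icc_succ_lt {n : ℕ} (hn : 1 ≤ n) :
    ∏' p : Nat.Primes, (1 + ∑ i ∈ Icc 2 (n + 1), ((p : ℝ) ^ i)⁻¹) <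
      (∑' j : ℕ+, ((j : ℝ) ^ (n + 1))⁻¹) *
        ∏' p : Nat.Primes, (1 + ∑ i ∈ Icc 2 n, ((p : ℝ) ^ i)⁻¹) := by
  have hn' : 2 ≤ n + 1 := by omega
  simp_rw [sum_Icc_succ_top hn', ← tprod_primes_inv_one_sub_inv_pow hn']
  refine tprod_one_add_add_lt_tprod_mul_tprod
    (summable_sum fun i hi ↦ summable_primes_inv_pow (mem_Icc.1 hi).1)
    (summable_primes_inv_pow hn') (fun p ↦ by positivity)
    (fun p ↦ inv_pos.2 (pow_pos (mod_cast p.2.pos) _)) fun p ↦ ?_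
  exact inv_lt_one_of_one_lt₀ (one_lt_pow₀ (by exact_mod_cast p.2.one_lt) (by omega))

theorem tsum_pnat_inv_pow_pos {k : ℕ} (hk : 2 ≤ k) : 0 < ∑' j : ℕ+, ((j : ℝ) ^ k)⁻¹ :=
  (summable_pnat_inv_pow hk).tsum_pos (fun j ↦ by positivity) 1 (by simp)

/-- The sequence `(Z_n)_{n ≥ 2}` is strictly decreasing. -/
theorem stmt14 (n : ℕ) (hn : 2 ≤ n) : Z (n + 1) < Z n := by
  have hA : 0 < ∏ i ∈ Icc 2 n, ∑' j : ℕ+, ((j : ℝ) ^ i)⁻¹ :=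
    prod_pos fun i hi ↦ tsum_pnat_inv_pow_pos (mem_Icc.1 hi).1
  rw [Z, Z, prod_Icc_succ_top (by omega), mul_inv, mul_assoc,
    mul_lt_mul_iff_right₀ (inv_pos.2 hA), inv_mul_lt_iff₀ (tsum_pnat_inv_pow_pos (by omega))]
  exact tprod_primes_one_add_sum_Icc_succ_lt (by omega)
end

section
/- Let x be a real number with 0 < x ≤ 1/2. Write C(x) := ∏_{j=1}^{∞} (1 − x^j) and, for an integer i ≥ 0, [1/x, i] := ∏_{j=1}^{i} (1 − x^j) (with [1/x, 0] = 1). Then the sequence ℓ ↦ C(x) · Σ_{i=0}^{ℓ} x^{i²}/[1/x, i]² is strictly increasing and converges to 1 as ℓ → ∞; equivalently, Σ_{i=0}^{∞} x^{i²}/(∏_{j=1}^{i} (1 − x^j))² = 1/∏_{j=1}^{∞} (1 − x^j) (Euler's identity). -/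
/-!
Write `(a;q)_n = ∏_{i<n} (1 - a q^i)` and `[n,k]` for the Gaussian binomial. By induction on `n`,
for all `a` at once, the `q`-Pascal rule gives
`∑_{j ≤ n} q^{j²} a^j [n,j] (a q^{j+1};q)_{n-j} = 1`; at `a = 1` this is the finite Euler identity
`∑_{j ≤ n} q^{j²} [n,j] / (q;q)_j = 1 / (q;q)_n`.
For `0 ≤ q < 1` we have `[n,j] ≤ 1 / (q;q)_j` and `[n,j] → 1 / (q;q)_j` as `n → ∞`, so the partial
sums `S_n = ∑_{j ≤ n} q^{j²} / (q;q)_j²` satisfy `1 / (q;q)_n ≤ S_n ≤ 1 / C`, where `C > 0` is the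
infinite product; hence `S_n → 1 / C`.
-/

open Filter Finset Topology

section CommRing

variable {R : Type*} [CommRing R]

def qPochhammer (a q : R) (n : ℕ) : R := ∏ i ∈ range n, (1 - a * q ^ i)

@[simp]
lemma qPochhammer_zero (a q : R) : qPochhammer a q 0 = 1 := prod_range_zero _

lemma qPochhammer_succ (a q : R) (n : ℕ) :
    qPochhammer a q (n + 1) = qPochhammer a q n * (1 - a * q ^ n) :=
  prod_range_succ _ n

lemma qPochhammer_add (a q : R) (m n : ℕ) :
    qPochhammer a q (m + n) = qPochhammer a q m * qPochhammer (a * q ^ m) q n := by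
  simp only [qPochhammer, prod_range_add, mul_assoc, ← pow_add]

lemma prod_Icc_one_sub_pow (q : R) (n : ℕ) :
    ∏ j ∈ Icc 1 n, (1 - q ^ j) = qPochhammer q q n := by
  induction n with
  | zero => simp
  | succ n ih => rw [prod_Icc_succ_top (by omega), ih, qPochhammer_succ, pow_succ' q n]

-- The exponent `n - k` truncates only when `n < k`, where `gaussBinom q n k = 0`.
def gaussBinom (q : R) : ℕ → ℕ → R
  | _, 0 => 1
  | 0, _ + 1 => 0
  | n + 1, k + 1 => gaussBinom q n (k + 1) + q ^ (n - k) * gaussBinom q n k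

@[simp]
lemma gaussBinom_zero_right (q : R) (n : ℕ) : gaussBinom q n 0 = 1 := by
  cases n <;> rfl

lemma gaussBinom_succ_succ (q : R) (n k : ℕ) :
    gaussBinom q (n + 1) (k + 1) = gaussBinom q n (k + 1) + q ^ (n - k) * gaussBinom q n k :=
  rfl

lemma gaussBinom_of_lt (q : R) {n k : ℕ} (h : n < k) : gaussBinom q n k = 0 := by
  induction n generalizing k with
  | zero => obtain ⟨k, rfl⟩ := Nat.exists_eq_add_of_lt h; rfl
  | succ n ih =>
    obtain ⟨k, rfl⟩ : ∃ j, k = j + 1 := ⟨k - 1, by omega⟩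
    rw [gaussBinom_succ_succ, ih (by omega), ih (by omega), mul_zero, add_zero]

lemma gaussBinom_mul_qPochhammer (q : R) {n k : ℕ} (h : k ≤ n) :
    gaussBinom q n k * qPochhammer q q k * qPochhammer q q (n - k) = qPochhammer q q n := by
  induction n generalizing k with
  | zero =>
    obtain rfl : k = 0 := by omega
    simp
  | succ n ih =>
    rcases k with _ | k
    · simp
    rcases h.lt_or_eq with h | h
    · obtain ⟨d, rfl⟩ := Nat.exists_eq_add_of_le (Nat.lt_succ_iff.mp h)
      have h₁ := ih (k := k + 1) (by omega)
      have h₂ := ih (k := k) (by omega)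
      rw [show k + 1 + d - (k + 1) = d by omega] at h₁
      rw [show k + 1 + d - k = d + 1 by omega] at h₂
      rw [show k + 1 + d + 1 - (k + 1) = d + 1 by omega, gaussBinom_succ_succ,
        show k + 1 + d - k = d + 1 by omega]
      simp only [qPochhammer_succ] at *
      linear_combination (1 - q * q ^ d) * h₁ + q ^ (d + 1) * (1 - q * q ^ k) * h₂
    · obtain rfl : k = n := by omega
      have h₁ := ih (k := k) le_rfl
      rw [Nat.sub_self, qPochhammer_zero, mul_one] at h₁
      rw [gaussBinom_succ_succ, gaussBinom_of_lt q (Nat.lt_succ_self k), Nat.sub_self,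
        Nat.sub_self, qPochhammer_succ, qPochhammer_zero]
      linear_combination (1 - q * q ^ k) * h₁

-- Writing `G_n(a)` for the sum, the `q`-Pascal rule gives
-- `G_{n+1}(a) = (1 - a q^{n+1}) G_n(a) + a q^{n+1} G_n(a q)`.
theorem sum_pow_sq_mul_gaussBinom_mul_qPochhammer (a q : R) (n : ℕ) :
    ∑ j ∈ range (n + 1),
      q ^ j ^ 2 * a ^ j * gaussBinom q n j * qPochhammer (a * q ^ (j + 1)) q (n - j) = 1 := by
  induction n generalizing a with
  | zero => simp
  | succ n ih =>
    have hshift : ∑ i ∈ range (n + 1), q ^ (i + 1) ^ 2 * a ^ (i + 1) * gaussBinom q n (i + 1) *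
        qPochhammer (a * q ^ (i + 1 + 1)) q (n - (i + 1)) + qPochhammer (a * q) q n = 1 := by
      rw [← ih a, sum_range_succ _ n, gaussBinom_of_lt q (Nat.lt_succ_self n), sum_range_succ']
      simp
    have hterm : ∀ i ∈ range (n + 1),
        q ^ (i + 1) ^ 2 * a ^ (i + 1) * gaussBinom q (n + 1) (i + 1) *
          qPochhammer (a * q ^ (i + 1 + 1)) q (n + 1 - (i + 1)) =
        (1 - a * q ^ (n + 1)) * (q ^ (i + 1) ^ 2 * a ^ (i + 1) * gaussBinom q n (i + 1) *
          qPochhammer (a * q ^ (i + 1 + 1)) q (n - (i + 1))) +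
        a * q ^ (n + 1) * (q ^ i ^ 2 * (a * q) ^ i * gaussBinom q n i *
          qPochhammer (a * q * q ^ (i + 1)) q (n - i)) := by
      intro i hi
      have hin : i ≤ n := Nat.lt_succ_iff.mp (mem_range.mp hi)
      have hpow : q ^ (i + 1) ^ 2 * q ^ (n - i) = q ^ (n + 1) * q ^ i ^ 2 * q ^ i := by
        rw [← pow_add, ← pow_add, ← pow_add]
        congr 1
        zify [hin]
        ring
      have hqa : a * q ^ (i + 1 + 1) = a * q * q ^ (i + 1) := by ring
      have hfirst : gaussBinom q n (i + 1) * qPochhammer (a * q ^ (i + 1 + 1)) q (n - i) =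
          (1 - a * q ^ (n + 1)) * (gaussBinom q n (i + 1) *
            qPochhammer (a * q ^ (i + 1 + 1)) q (n - (i + 1))) := by
        rcases hin.lt_or_eq with hlt | rfl
        · rw [show n - i = n - (i + 1) + 1 by omega, qPochhammer_succ, mul_assoc, ← pow_add,
            show i + 1 + 1 + (n - (i + 1)) = n + 1 by omega]
          ring
        · simp [gaussBinom_of_lt q (Nat.lt_succ_self i)]
      rw [Nat.add_sub_add_right, gaussBinom_succ_succ, ← hqa]
      linear_combination q ^ (i + 1) ^ 2 * a ^ (i + 1) * hfirst +
        a ^ (i + 1) * gaussBinom q n i * qPochhammer (a * q ^ (i + 1 + 1)) q (n - i) * hpow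
    rw [sum_range_succ', sum_congr rfl hterm, sum_add_distrib, ← mul_sum, ← mul_sum, ih]
    simp only [zero_add, pow_one, Nat.sub_zero, zero_pow two_ne_zero, pow_zero,
      gaussBinom_zero_right, one_mul, qPochhammer_succ]
    linear_combination (1 - a * q ^ (n + 1)) * hshift

end CommRing

lemma gaussBinom_nonneg {R : Type*} [CommRing R] [PartialOrder R] [IsOrderedRing R] {q : R}
    (hq : 0 ≤ q) : ∀ n k, 0 ≤ gaussBinom q n k
  | _, 0 => by simp
  | 0, _ + 1 => le_rfl
  | n + 1, k + 1 => add_nonneg (gaussBinom_nonneg hq n (k + 1))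
      (mul_nonneg (pow_nonneg hq _) (gaussBinom_nonneg hq n k))

theorem sum_pow_sq_mul_gaussBinom_div_qPochhammer {K : Type*} [Field K] (q : K)
    (hq : ∀ k, qPochhammer q q k ≠ 0) (n : ℕ) :
    ∑ j ∈ range (n + 1), q ^ j ^ 2 * gaussBinom q n j / qPochhammer q q j =
      (qPochhammer q q n)⁻¹ := by
  refine eq_inv_of_mul_eq_one_left ?_
  rw [sum_mul, ← sum_pow_sq_mul_gaussBinom_mul_qPochhammer 1 q n]
  refine sum_congr rfl fun j hj ↦ ?_
  have hsplit := qPochhammer_add q q j (n - j)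
  rw [Nat.add_sub_cancel' (Nat.lt_succ_iff.mp (mem_range.mp hj))] at hsplit
  rw [hsplit, one_mul, one_pow, mul_one, ← pow_succ']
  field_simp [hq j]

section Real

variable {a q C : ℝ}

lemma qPochhammer_pos (ha0 : 0 ≤ a) (ha1 : a < 1) (hq0 : 0 ≤ q) (hq1 : q ≤ 1) (n : ℕ) :
    0 < qPochhammer a q n :=
  prod_pos fun _ _ ↦ sub_pos.2 <| mul_lt_one_of_nonneg_of_lt_one_left ha0 ha1 (pow_le_one₀ hq0 hq1)

lemma qPochhammer_antitone (ha0 : 0 ≤ a) (ha1 : a < 1) (hq0 : 0 ≤ q) (hq1 : q ≤ 1) :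
    Antitone (qPochhammer a q) := by
  refine antitone_nat_of_succ_le fun n ↦ ?_
  rw [qPochhammer_succ]
  exact mul_le_of_le_one_right (qPochhammer_pos ha0 ha1 hq0 hq1 n).le
    (sub_le_self _ (by positivity))

lemma pos_of_tendsto_qPochhammer (ha0 : 0 ≤ a) (ha1 : a < 1) (hq0 : 0 ≤ q) (hq1 : q < 1)
    (hC : Tendsto (qPochhammer a q) atTop (𝓝 C)) : 0 < C := by
  have hsum : Summable fun i : ℕ ↦ ‖-(a * q ^ i)‖ := by
    simpa [norm_mul, abs_of_nonneg ha0, abs_of_nonneg hq0] using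
      (summable_geometric_of_lt_one hq0 hq1).mul_left a
  have hfactor (i : ℕ) : a * q ^ i < 1 :=
    mul_lt_one_of_nonneg_of_lt_one_left ha0 ha1 (pow_le_one₀ hq0 hq1.le)
  have hne : ∏' i : ℕ, (1 - a * q ^ i) ≠ 0 := by
    simpa only [← sub_eq_add_neg] using
      tprod_one_add_ne_zero_of_summable (fun i ↦ by linarith [hfactor i]) hsum
  have hmul : Multipliable fun i : ℕ ↦ 1 - a * q ^ i := by
    simpa only [← sub_eq_add_neg] using multipliable_one_add_of_summable hsum
  have hCeq : C = ∏' i : ℕ, (1 - a * q ^ i) :=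
    tendsto_nhds_unique hC hmul.hasProd.tendsto_prod_nat
  exact (ge_of_tendsto' hC fun n ↦ (qPochhammer_pos ha0 ha1 hq0 hq1.le n).le).lt_of_ne
    (hCeq ▸ hne.symm)

section
variable (hq0 : 0 ≤ q) (hq1 : q < 1)
include hq0 hq1

lemma gaussBinom_le_inv_qPochhammer (n k : ℕ) : gaussBinom q n k ≤ (qPochhammer q q k)⁻¹ := by
  have hpos := qPochhammer_pos hq0 hq1 hq0 hq1.le
  rcases le_or_gt k n with h | h
  · rw [← one_div, le_div_iff₀ (hpos k)]
    refine le_of_mul_le_mul_right ?_ (hpos (n - k))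
    rw [gaussBinom_mul_qPochhammer q h, one_mul]
    exact qPochhammer_antitone hq0 hq1 hq0 hq1.le (Nat.sub_le n k)
  · rw [gaussBinom_of_lt q h]
    exact inv_nonneg.2 (hpos k).le

lemma tendsto_gaussBinom (hC : Tendsto (qPochhammer q q) atTop (𝓝 C)) (hC0 : C ≠ 0) (k : ℕ) :
    Tendsto (fun n ↦ gaussBinom q n k) atTop (𝓝 (qPochhammer q q k)⁻¹) := by
  have hpos := qPochhammer_pos hq0 hq1 hq0 hq1.le
  have hlim := hC.div (tendsto_const_nhds.mul (hC.comp (tendsto_sub_atTop_nat k)))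
    (mul_ne_zero (hpos k).ne' hC0)
  rw [show C / (qPochhammer q q k * C) = (qPochhammer q q k)⁻¹ by field_simp] at hlim
  refine hlim.congr' (eventually_atTop.2 ⟨k, fun n hn ↦ ?_⟩)
  dsimp only [Pi.div_apply, Function.comp_apply]
  rw [div_eq_iff (mul_ne_zero (hpos k).ne' (hpos (n - k)).ne'),
    ← mul_assoc, gaussBinom_mul_qPochhammer q hn]

theorem tendsto_sum_pow_sq_div_qPochhammer_sq (hC : Tendsto (qPochhammer q q) atTop (𝓝 C)) :
    Tendsto (fun n ↦ ∑ j ∈ range (n + 1), q ^ j ^ 2 / qPochhammer q q j ^ 2) atTop (𝓝 C⁻¹) := by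
  have hC0 : 0 < C := pos_of_tendsto_qPochhammer hq0 hq1 hq0 hq1 hC
  have hpos := qPochhammer_pos hq0 hq1 hq0 hq1.le
  have hfinite := sum_pow_sq_mul_gaussBinom_div_qPochhammer q fun k ↦ (hpos k).ne'
  have hinv : Tendsto (fun n ↦ (qPochhammer q q n)⁻¹) atTop (𝓝 C⁻¹) := hC.inv₀ hC0.ne'
  have hlower (n : ℕ) :
      (qPochhammer q q n)⁻¹ ≤ ∑ j ∈ range (n + 1), q ^ j ^ 2 / qPochhammer q q j ^ 2 := by
    rw [← hfinite n]
    refine sum_le_sum fun j _ ↦ ?_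
    calc q ^ j ^ 2 * gaussBinom q n j / qPochhammer q q j
        ≤ q ^ j ^ 2 * (qPochhammer q q j)⁻¹ / qPochhammer q q j := by
          gcongr
          · exact (hpos j).le
          · exact gaussBinom_le_inv_qPochhammer hq0 hq1 n j
      _ = q ^ j ^ 2 / qPochhammer q q j ^ 2 := by field_simp
  have hupper (m : ℕ) : ∑ j ∈ range (m + 1), q ^ j ^ 2 / qPochhammer q q j ^ 2 ≤ C⁻¹ := by
    have hlim : Tendsto (fun n ↦ ∑ j ∈ range (m + 1), q ^ j ^ 2 * gaussBinom q n j /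
        qPochhammer q q j) atTop (𝓝 (∑ j ∈ range (m + 1), q ^ j ^ 2 / qPochhammer q q j ^ 2)) := by
      refine tendsto_finsetSum _ fun j _ ↦ ?_
      convert ((tendsto_gaussBinom hq0 hq1 hC hC0.ne' j).const_mul (q ^ j ^ 2)).div_const
        (qPochhammer q q j) using 2
      field_simp
    refine le_of_tendsto_of_tendsto hlim hinv (eventually_atTop.2 ⟨m, fun n hn ↦ ?_⟩)
    dsimp only
    rw [← hfinite n]
    exact sum_le_sum_of_subset_of_nonneg (range_subset_range.2 (by omega)) fun j _ _ ↦
      div_nonneg (mul_nonneg (pow_nonneg hq0 _) (gaussBinom_nonneg hq0 n j)) (hpos j).le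
  exact tendsto_of_tendsto_of_tendsto_of_le_of_le hinv tendsto_const_nhds hlower hupper

end

end Real

/-- Euler's identity: for `0 < x ≤ 1/2`, with `C(x) = ∏_{j=1}^{∞} (1 - x^j)`
and `[1/x, i] = ∏_{j=1}^{i} (1 - x^j)`, the sequence
`ℓ ↦ C(x)·∑_{i=0}^{ℓ} x^{i²}/[1/x,i]²` is strictly increasing and converges
to 1; equivalently `∑_{i=0}^{∞} x^{i²}/[1/x,i]² = C(x)⁻¹`. -/
theorem stmt18 (x : ℝ) (hx0 : 0 < x) (hx : x ≤ 1 / 2) (C : ℝ)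
    (hC : Tendsto (fun k : ℕ => ∏ j ∈ Finset.Icc 1 k, (1 - x ^ j)) atTop
      (nhds C)) :
    StrictMono (fun l : ℕ => C * ∑ i ∈ Finset.range (l + 1),
      x ^ (i ^ 2) / (∏ j ∈ Finset.Icc 1 i, (1 - x ^ j)) ^ 2) ∧
    Tendsto (fun l : ℕ => C * ∑ i ∈ Finset.range (l + 1),
      x ^ (i ^ 2) / (∏ j ∈ Finset.Icc 1 i, (1 - x ^ j)) ^ 2) atTop (nhds 1) ∧
    (∑' i : ℕ, x ^ (i ^ 2) / (∏ j ∈ Finset.Icc 1 i, (1 - x ^ j)) ^ 2) = C⁻¹ := by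
  have hx1 : x < 1 := by linarith
  simp only [prod_Icc_one_sub_pow] at hC ⊢
  have hC0 : 0 < C := pos_of_tendsto_qPochhammer hx0.le hx1 hx0.le hx1 hC
  have hpartial := tendsto_sum_pow_sq_div_qPochhammer_sq hx0.le hx1 hC
  have hterm (i : ℕ) : 0 < x ^ i ^ 2 / qPochhammer x x i ^ 2 :=
    div_pos (pow_pos hx0 _) (pow_pos (qPochhammer_pos hx0.le hx1 hx0.le hx1.le i) 2)
  refine ⟨strictMono_nat_of_lt_succ fun l ↦ mul_lt_mul_of_pos_left ?_ hC0, ?_, ?_⟩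
  · rw [sum_range_succ _ (l + 1)]
    exact lt_add_of_pos_right _ (hterm _)
  · simpa [mul_inv_cancel₀ hC0.ne'] using hpartial.const_mul C
  · exact ((hasSum_iff_tendsto_nat_of_nonneg (fun i ↦ (hterm i).le) _).2
      ((tendsto_add_atTop_iff_nat 1).1 hpartial)).tsum_eq
end
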